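/- arXiv:2007.08045 — 3 statements merged into one kernel-verified Lean document; each statement's English description precedes it below -/
import Mathlib

section
/- (Split lemma, part i–ii) Let 𝒯 be an envy-free feasible allocation and suppose agents of type x are split, i.e., there are distinct coalitions T, T' ∈ 𝒯 each containing an agent of destination exactly x. Then no agent in T or T' has destination strictly less than x (the type-x agents are the first to drop off in both coalitions), and |T| = |T'|. -/
open Finset MeasureTheory ENNReal

/-- Number of agents in coalition `T` whose destination is at least `r`. -/
noncomputable def nT (xd : ℕ → ℝ) (T : Finset ℕ) (r : ℝ) : ℕ := (T.filter fun a => r ≤ xd a).card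

/-- Shapley cost share of a passenger dropping at `y` in coalition `T`
(`∞` when `n_T` vanishes on part of `(0,y]`). -/
noncomputable def phi (xd : ℕ → ℝ) (T : Finset ℕ) (y : ℝ) : ℝ≥0∞ :=
  ∫⁻ r in Set.Ioc (0:ℝ) y, (nT xd T r : ℝ≥0∞)⁻¹

/-- Cost share including the capacity constraint of the taxi. -/
noncomputable def taxiCost (xd : ℕ → ℝ) (q : ℕ) (T : Finset ℕ) (y : ℝ) : ℝ≥0∞ :=
  if T.card ≤ q then phi xd T y else ⊤

/-- `Tl` is a partition of the agent set `A` into the (possibly empty) coalitions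
of the `k` taxis. -/
def IsPartition (A : Finset ℕ) {k : ℕ} (Tl : Fin k → Finset ℕ) : Prop :=
  (∀ i j, i ≠ j → Disjoint (Tl i) (Tl j)) ∧ Finset.univ.biUnion Tl = A

/-- Feasibility: each coalition respects the capacity of its taxi. -/
def Feasible {k : ℕ} (q : Fin k → ℕ) (Tl : Fin k → Finset ℕ) : Prop :=
  ∀ i, (Tl i).card ≤ q i

/-- Envy-freeness: no agent `a` can lower her cost by replacing an agent `b`
of another taxi. -/
def EnvyFree (xd : ℕ → ℝ) {k : ℕ} (q : Fin k → ℕ) (Tl : Fin k → Finset ℕ) : Prop :=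
  ∀ i j, i ≠ j → ∀ a ∈ Tl i, ∀ b ∈ Tl j,
    taxiCost xd (q i) (Tl i) (xd a) ≤ taxiCost xd (q j) ((Tl j).erase b ∪ {a}) (xd a)

/-
Two agents of the same destination `x` sitting in different coalitions can trade places without
changing anyone's cost, so envy-freeness forces `φ(T, x) = φ(T', x)`. If some `c ∈ T` left before
`x`, the type-`x` agent of `T'` could take `c`'s seat: on `(xd c, x]` one more passenger would
share the ride, which strictly lowers her cost below `φ(T, x) = φ(T', x)`, i.e. she would envy `c`.
Once everybody in `T` and `T'` rides at least to `x`, `φ(T, x) = x / |T|` and `φ(T', x) = x / |T'|`.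
-/

lemma nT_antitone (xd : ℕ → ℝ) (T : Finset ℕ) : Antitone (nT xd T) :=
  fun _ _ hrs => card_le_card <| monotone_filter_right _ fun _ _ h => hrs.trans h

lemma measurable_inv_nT (xd : ℕ → ℝ) (T : Finset ℕ) :
    Measurable fun r => (nT xd T r : ℝ≥0∞)⁻¹ :=
  (measurable_from_top.comp (nT_antitone xd T).measurable).inv

lemma one_le_nT {xd : ℕ → ℝ} {T : Finset ℕ} {b : ℕ} (hb : b ∈ T) {r : ℝ} (hr : r ≤ xd b) :
    1 ≤ nT xd T r :=
  card_pos.mpr ⟨b, mem_filter.mpr ⟨hb, hr⟩⟩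

section Swap

variable {xd : ℕ → ℝ} {T : Finset ℕ} {b c : ℕ}

lemma card_erase_union_singleton (hc : c ∈ T) (hb : b ∉ T) : (T.erase c ∪ {b}).card = T.card := by
  rw [union_comm, ← insert_eq, card_insert_of_notMem (fun h => hb (mem_of_mem_erase h)),
    card_erase_add_one hc]

lemma nT_erase_union_singleton_add (hc : c ∈ T) (hb : b ∉ T) (r : ℝ) :
    nT xd (T.erase c ∪ {b}) r + (if r ≤ xd c then 1 else 0) =
      nT xd T r + (if r ≤ xd b then 1 else 0) := by
  simp only [nT, card_filter]
  rw [union_comm, ← insert_eq, sum_insert (fun h => hb (mem_of_mem_erase h)),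
    ← sum_erase_add _ _ hc]
  ring

lemma phi_erase_union_singleton_of_eq (hc : c ∈ T) (hb : b ∉ T) (hbc : xd b = xd c) (y : ℝ) :
    phi xd (T.erase c ∪ {b}) y = phi xd T y := by
  refine lintegral_congr fun r => ?_
  have := nT_erase_union_singleton_add (xd := xd) hc hb r
  rw [hbc, Nat.add_right_cancel_iff] at this
  rw [this]

lemma phi_le_ofReal (hb : b ∈ T) {y : ℝ} (hy : y ≤ xd b) : phi xd T y ≤ ENNReal.ofReal y := by
  calc phi xd T y ≤ ∫⁻ _ in Set.Ioc (0 : ℝ) y, 1 :=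
        setLIntegral_mono measurable_const fun r hr =>
          ENNReal.inv_le_one.mpr (by exact_mod_cast one_le_nT hb (hr.2.trans hy))
    _ = ENNReal.ofReal y := by rw [setLIntegral_const, one_mul, Real.volume_Ioc, sub_zero]

lemma phi_erase_union_singleton_lt (hc : c ∈ T) (hb : b ∉ T) {x : ℝ} (hx : 0 < x)
    (hcx : xd c < x) (hxb : x ≤ xd b) :
    phi xd (T.erase c ∪ {b}) x < phi xd T x := by
  have hswap := nT_erase_union_singleton_add (xd := xd) hc hb
  have hfin : phi xd (T.erase c ∪ {b}) x ≠ ∞ :=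
    ((phi_le_ofReal (mem_union_right _ (mem_singleton_self b)) hxb).trans_lt
      ENNReal.ofReal_lt_top).ne
  have hle : ∀ r ∈ Set.Ioc (0 : ℝ) x,
      (nT xd (T.erase c ∪ {b}) r : ℝ≥0∞)⁻¹ ≤ (nT xd T r : ℝ≥0∞)⁻¹ := fun r hr => by
    have := hswap r
    rw [if_pos (hr.2.trans hxb)] at this
    refine ENNReal.inv_le_inv.mpr (Nat.cast_le.mpr ?_)
    split_ifs at this <;> omega
  have hlt : ∀ r ∈ Set.Ioc (xd c) x,
      (nT xd (T.erase c ∪ {b}) r : ℝ≥0∞)⁻¹ < (nT xd T r : ℝ≥0∞)⁻¹ := fun r hr => by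
    have := hswap r
    rw [if_neg (not_le.mpr hr.1), if_pos (hr.2.trans hxb), add_zero] at this
    rw [this, Nat.cast_add_one]
    exact ENNReal.inv_lt_inv.mpr (ENNReal.lt_add_right (ENNReal.natCast_ne_top _) one_ne_zero)
  have hvol : volume.restrict (Set.Ioc 0 x) (Set.Ioc (xd c) x) ≠ 0 := by
    rw [Measure.restrict_apply measurableSet_Ioc, Set.Ioc_inter_Ioc, Real.volume_Ioc]
    simpa using ⟨hcx, hx⟩
  exact lintegral_strict_mono_of_ae_le_of_ae_lt_on (measurable_inv_nT xd T).aemeasurable hfin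
    (ae_restrict_of_forall_mem measurableSet_Ioc hle) hvol (Filter.Eventually.of_forall hlt)

end Swap

lemma phi_eq_ofReal_div_card {xd : ℕ → ℝ} {T : Finset ℕ} {x : ℝ} (hT : ∀ c ∈ T, x ≤ xd c) :
    phi xd T x = ENNReal.ofReal x / T.card := by
  have hn : ∀ r ∈ Set.Ioc (0 : ℝ) x, (nT xd T r : ℝ≥0∞)⁻¹ = (T.card : ℝ≥0∞)⁻¹ := fun r hr => by
    rw [nT, filter_true_of_mem fun c hc => hr.2.trans (hT c hc)]
  rw [phi, setLIntegral_congr_fun measurableSet_Ioc hn, setLIntegral_const, Real.volume_Ioc,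
    sub_zero, div_eq_mul_inv, mul_comm]

section EnvyFree

variable {xd : ℕ → ℝ} {k : ℕ} {q : Fin k → ℕ} {Tl : Fin k → Finset ℕ} {i j : Fin k} {a b : ℕ}

lemma EnvyFree.phi_le_phi_erase_union_singleton (hef : EnvyFree xd q Tl) (hfeas : Feasible q Tl)
    (hij : i ≠ j) (ha : a ∈ Tl i) (hb : b ∈ Tl j) (haj : a ∉ Tl j) :
    phi xd (Tl i) (xd a) ≤ phi xd ((Tl j).erase b ∪ {a}) (xd a) := by
  have h := hef i j hij a ha b hb
  rwa [taxiCost, taxiCost, if_pos (hfeas i),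
    if_pos ((card_erase_union_singleton hb haj).trans_le (hfeas j))] at h

lemma EnvyFree.phi_le_phi_of_split (hef : EnvyFree xd q Tl) (hfeas : Feasible q Tl)
    (hij : i ≠ j) (ha : a ∈ Tl i) (hb : b ∈ Tl j) (haj : a ∉ Tl j) (hab : xd a = xd b) :
    phi xd (Tl i) (xd a) ≤ phi xd (Tl j) (xd a) :=
  (hef.phi_le_phi_erase_union_singleton hfeas hij ha hb haj).trans_eq
    (phi_erase_union_singleton_of_eq hb haj hab _)

lemma EnvyFree.forall_le_of_split (hef : EnvyFree xd q Tl) (hfeas : Feasible q Tl) (hij : i ≠ j)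
    (ha : a ∈ Tl i) (hb : b ∈ Tl j) (haj : a ∉ Tl j) (hbi : b ∉ Tl i) (hab : xd a = xd b)
    (hpos : 0 < xd a) : ∀ c ∈ Tl i, xd a ≤ xd c := by
  intro c hc
  by_contra! hca
  have hbc := hef.phi_le_phi_erase_union_singleton hfeas hij.symm hb hc hbi
  rw [← hab] at hbc
  exact lt_irrefl _ <| (hef.phi_le_phi_of_split hfeas hij ha hb haj hab).trans_lt <|
    hbc.trans_lt <| phi_erase_union_singleton_lt hc hbi hpos hca hab.le

end EnvyFree

theorem stmt4_general (A : Finset ℕ) (xd : ℕ → ℝ) (hpos : ∀ a ∈ A, 0 < xd a)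
    (k : ℕ) (q : Fin k → ℕ)
    (Tl : Fin k → Finset ℕ)
    (hpart : IsPartition A Tl) (hfeas : Feasible q Tl) (hef : EnvyFree xd q Tl)
    (i j : Fin k) (hij : i ≠ j) (x : ℝ) (a b : ℕ)
    (ha : a ∈ Tl i) (hb : b ∈ Tl j) (hax : xd a = x) (hbx : xd b = x) :
    (∀ c ∈ Tl i, ¬ xd c < x) ∧ (∀ c ∈ Tl j, ¬ xd c < x) ∧
      (Tl i).card = (Tl j).card := by
  subst hax
  have haj : a ∉ Tl j := disjoint_left.mp (hpart.1 i j hij) ha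
  have hbi : b ∉ Tl i := disjoint_right.mp (hpart.1 i j hij) hb
  have hx : 0 < xd a := hpos a (hpart.2 ▸ mem_biUnion.mpr ⟨i, mem_univ i, ha⟩)
  have hi := hef.forall_le_of_split hfeas hij ha hb haj hbi hbx.symm hx
  have hj := hef.forall_le_of_split hfeas hij.symm hb ha hbi haj hbx (hbx ▸ hx)
  rw [hbx] at hj
  refine ⟨fun c hc => (hi c hc).not_gt, fun c hc => (hj c hc).not_gt, ?_⟩
  have hphi : phi xd (Tl i) (xd a) = phi xd (Tl j) (xd a) :=
    (hef.phi_le_phi_of_split hfeas hij ha hb haj hbx.symm).antisymm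
      (hbx ▸ hef.phi_le_phi_of_split hfeas hij.symm hb ha hbi hbx)
  rw [phi_eq_ofReal_div_card hi, phi_eq_ofReal_div_card hj, div_eq_mul_inv, div_eq_mul_inv,
    ENNReal.mul_right_inj (ENNReal.ofReal_pos.mpr hx).ne' ENNReal.ofReal_ne_top, inv_inj] at hphi
  exact_mod_cast hphi

/-- Split lemma, parts i–ii: if agents of type `x` are split between two
distinct coalitions of an envy-free feasible allocation, then no member of either
coalition has destination `< x`, and the two coalitions have equal size. -/
theorem stmt4 (A : Finset ℕ) (xd : ℕ → ℝ) (hpos : ∀ a ∈ A, 0 < xd a)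
    (k : ℕ) (q : Fin k → ℕ) (hq : ∀ i j : Fin k, i ≤ j → q j ≤ q i)
    (Tl : Fin k → Finset ℕ)
    (hpart : IsPartition A Tl) (hfeas : Feasible q Tl) (hef : EnvyFree xd q Tl)
    (i j : Fin k) (hij : i ≠ j) (x : ℝ) (a b : ℕ)
    (ha : a ∈ Tl i) (hb : b ∈ Tl j) (hax : xd a = x) (hbx : xd b = x) :
    (∀ c ∈ Tl i, ¬ xd c < x) ∧ (∀ c ∈ Tl j, ¬ xd c < x) ∧
      (Tl i).card = (Tl j).card :=
  stmt4_general A xd hpos k q Tl hpart hfeas hef i j hij x a b ha hb hax hbx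
end

section
/- (Lemma about near-unanimous first drop-off) Let 𝒯 be an envy-free feasible allocation and T ∈ 𝒯 with |T_{=x}| = |T| − 1 where x = min_{a∈T} x_a. Then for any other T' ∈ 𝒯 with |T'| = |T|, either min_{a∈T'} x_a < x, or every agent of T' has destination exactly x. -/
open Finset MeasureTheory ENNReal

section Count

variable {xd : ℕ → ℝ} {T : Finset ℕ} {r : ℝ}

lemma nT_le_card : nT xd T r ≤ T.card := card_filter_le _ _

lemma nT_eq_card (h : ∀ a ∈ T, r ≤ xd a) : nT xd T r = T.card :=
  congrArg card (filter_true_of_mem h)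

lemma nT_pos {a : ℕ} (ha : a ∈ T) (hr : r ≤ xd a) : 0 < nT xd T r :=
  card_pos.2 ⟨a, mem_filter.2 ⟨ha, hr⟩⟩

lemma two_le_nT {a b : ℕ} (ha : a ∈ T) (hb : b ∈ T) (hab : a ≠ b) (hra : r ≤ xd a)
    (hrb : r ≤ xd b) : 2 ≤ nT xd T r := by
  rw [← card_pair hab]
  refine card_le_card fun c hc => ?_
  obtain rfl | rfl : c = a ∨ c = b := by simpa using hc
  · exact mem_filter.2 ⟨ha, hra⟩
  · exact mem_filter.2 ⟨hb, hrb⟩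

lemma nT_le_one_of_card_filter_eq {x : ℝ}
    (hT : (T.filter fun a => xd a = x).card = T.card - 1) (hr : x < r) : nT xd T r ≤ 1 := by
  have hdisj : Disjoint (T.filter fun a => r ≤ xd a) (T.filter fun a => xd a = x) :=
    disjoint_filter.2 fun a _ hra hax => (hax ▸ hra).not_gt hr
  have := card_le_card <|
    union_subset (filter_subset (fun a => r ≤ xd a) T) (filter_subset (fun a => xd a = x) T)
  rw [card_union_of_disjoint hdisj] at this
  unfold nT
  omega

end Count

lemma card_erase_union_singleton_s10 {α : Type*} [DecidableEq α] {s : Finset α} {a b : α}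
    (hb : b ∈ s) (ha : a ∉ s) : (s.erase b ∪ {a}).card = s.card := by
  rw [card_union_of_disjoint (disjoint_singleton_right.2 fun h => ha (mem_of_mem_erase h)),
    card_singleton, card_erase_add_one hb]

lemma phi_lt_phi {xd : ℕ → ℝ} {S T : Finset ℕ} {y u v : ℝ} (hu : 0 ≤ u) (huv : u < v)
    (hv : v ≤ y) (hpos : ∀ r ∈ Set.Ioc 0 y, 0 < nT xd T r)
    (hle : ∀ r ∈ Set.Ioc 0 y, nT xd T r ≤ nT xd S r)
    (hlt : ∀ r ∈ Set.Ioc u v, nT xd T r < nT xd S r) : phi xd S y < phi xd T y := by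
  have hsub : Set.Ioc u v ⊆ Set.Ioc 0 y := Set.Ioc_subset_Ioc hu hv
  have hfin : phi xd S y ≠ ⊤ := by
    refine ne_top_of_le_ne_top (b := ∫⁻ _ in Set.Ioc 0 y, 1) ?_ ?_
    · simp [Real.volume_Ioc]
    · refine setLIntegral_mono measurable_const fun r hr => ?_
      exact ENNReal.inv_le_one.2 (by exact_mod_cast (hpos r hr).trans_le (hle r hr))
  refine lintegral_strict_mono_of_ae_le_of_ae_lt_on (measurable_inv_nT xd T).aemeasurable hfin
    ((ae_restrict_iff' measurableSet_Ioc).2 (ae_of_all _ fun r hr => ?_)) (s := Set.Ioc u v)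
    ?_ (ae_of_all _ fun r hr => ?_)
  · exact ENNReal.inv_le_inv.2 (by exact_mod_cast hle r hr)
  · rw [Measure.restrict_apply measurableSet_Ioc, Set.inter_eq_left.2 hsub, Real.volume_Ioc]
    exact (ENNReal.ofReal_pos.2 (sub_pos.2 huv)).ne'
  · exact ENNReal.inv_lt_inv.2 (by exact_mod_cast hlt r hr)

lemma phi_erase_union_lt {xd : ℕ → ℝ} {T T' : Finset ℕ} {x : ℝ} {w b c : ℕ} (hx : 0 ≤ x)
    (hT : (T.filter fun a => xd a = x).card = T.card - 1) (hcard : T'.card = T.card)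
    (hT' : ∀ a ∈ T', x ≤ xd a) (hwT : w ∈ T) (hwT' : w ∉ T') (hb : b ∈ T') (hc : c ∈ T')
    (hbc : b ≠ c) (hxw : x < xd w) (hxc : x < xd c) :
    phi xd (T'.erase b ∪ {w}) (xd w) < phi xd T (xd w) := by
  set S := T'.erase b ∪ {w}
  have hwS : w ∈ S := mem_union_right _ (mem_singleton_self w)
  have hcS : c ∈ S := mem_union_left _ (mem_erase.2 ⟨hbc.symm, hc⟩)
  have hS : ∀ a ∈ S, x ≤ xd a := by
    intro a ha
    rcases mem_union.1 ha with ha | ha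
    · exact hT' a (mem_of_mem_erase ha)
    · exact mem_singleton.1 ha ▸ hxw.le
  refine phi_lt_phi hx (lt_min hxw hxc) (min_le_left _ _) (fun r hr => nT_pos hwT hr.2)
    (fun r hr => ?_) fun r hr => ?_
  · rcases le_or_gt r x with hrx | hxr
    · rw [nT_eq_card fun a ha => hrx.trans (hS a ha), card_erase_union_singleton_s10 hb hwT', hcard]
      exact nT_le_card
    · exact (nT_le_one_of_card_filter_eq hT hxr).trans (nT_pos hwS hr.2)
  · calc nT xd T r ≤ 1 := nT_le_one_of_card_filter_eq hT hr.1
      _ < 2 := one_lt_two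
      _ ≤ nT xd S r := two_le_nT hwS hcS (fun h => hwT' (h ▸ hc))
          (hr.2.trans (min_le_left _ _)) (hr.2.trans (min_le_right _ _))

theorem stmt10_general (A : Finset ℕ) (xd : ℕ → ℝ) (hpos : ∀ a ∈ A, 0 < xd a)
    (k : ℕ) (q : Fin k → ℕ)
    (Tl : Fin k → Finset ℕ)
    (hpart : IsPartition A Tl) (hfeas : Feasible q Tl) (hef : EnvyFree xd q Tl)
    (i : Fin k) (hi : (Tl i).Nonempty)
    (hsplit : ((Tl i).filter fun c => xd c = (Tl i).inf' hi xd).card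
              = (Tl i).card - 1)
    (j : Fin k) (hij : j ≠ i) (hj : (Tl j).Nonempty)
    (hcard : (Tl j).card = (Tl i).card) :
    (Tl j).inf' hj xd < (Tl i).inf' hi xd ∨
      ∀ c ∈ Tl j, xd c = (Tl i).inf' hi xd := by
  obtain ⟨a₀, ha₀, ha₀x⟩ := exists_mem_eq_inf' hi xd
  set x := (Tl i).inf' hi xd
  refine or_iff_not_imp_left.2 fun hge c hc => by_contra fun hcx => ?_
  have hTj : ∀ a ∈ Tl j, x ≤ xd a := fun a ha => (not_lt.1 hge).trans (inf'_le xd ha)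
  have hxc : x < xd c := (hTj c hc).lt_of_ne' hcx
  have hx : 0 < x := ha₀x.symm ▸ hpos a₀ (hpart.2 ▸ mem_biUnion.2 ⟨i, mem_univ i, ha₀⟩)
  obtain ⟨w, hwi, hwx⟩ : ∃ w ∈ Tl i, xd w ≠ x := by
    by_contra! h
    rw [filter_true_of_mem h] at hsplit
    have := hi.card_pos
    omega
  have hxw : x < xd w := (inf'_le xd hwi).lt_of_ne' hwx
  have hwj : w ∉ Tl j := disjoint_left.1 (hpart.1 i j hij.symm) hwi
  obtain ⟨b, hb, hbc⟩ := exists_mem_ne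
    (hcard ▸ one_lt_card.2 ⟨a₀, ha₀, w, hwi, fun h => hwx (h ▸ ha₀x.symm)⟩) c
  have henvy := hef i j hij.symm w hwi b hb
  rw [taxiCost, taxiCost, if_pos (hfeas i),
    if_pos ((card_erase_union_singleton_s10 hb hwj).trans_le (hfeas j))] at henvy
  exact henvy.not_gt (phi_erase_union_lt hx.le hsplit hcard hTj hwi hwj hb hc hbc hxw hxc)

/-- if in an envy-free feasible allocation all but one member of a
coalition `T` drop off at its first drop-off point `x`, then any other coalition of the
same size either has its first drop-off point strictly before `x`, or consists solely
of agents with destination `x`. -/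
theorem stmt10 (A : Finset ℕ) (xd : ℕ → ℝ) (hpos : ∀ a ∈ A, 0 < xd a)
    (k : ℕ) (q : Fin k → ℕ) (hq : ∀ i j : Fin k, i ≤ j → q j ≤ q i)
    (Tl : Fin k → Finset ℕ)
    (hpart : IsPartition A Tl) (hfeas : Feasible q Tl) (hef : EnvyFree xd q Tl)
    (i : Fin k) (hi : (Tl i).Nonempty)
    (hsplit : ((Tl i).filter fun c => xd c = (Tl i).inf' hi xd).card
              = (Tl i).card - 1)
    (j : Fin k) (hij : j ≠ i) (hj : (Tl j).Nonempty)
    (hcard : (Tl j).card = (Tl i).card) :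
    (Tl j).inf' hj xd < (Tl i).inf' hi xd ∨
      ∀ c ∈ Tl j, xd c = (Tl i).inf' hi xd :=
  stmt10_general A xd hpos k q Tl hpart hfeas hef i hi hsplit j hij hj hcard
end

section
/- (Envy-freeness implies strong swap-stability) Every envy-free feasible allocation is strongly swap-stable, and every strongly swap-stable allocation is weakly swap-stable. Moreover, both inclusions are strict: there exist instances with feasible allocations that are strongly swap-stable but not envy-free, and weakly swap-stable but not strongly swap-stable. -/
/-!
An envious agent strictly gains from the swap, so in particular it can replace its target;
this gives EF ⊆ SSS ⊆ WSS. In the separating instances the Shapley shares are computed by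
splitting `(0, y]` at the destinations, on whose pieces the number of riders is constant.
Since at most `q` riders share any stretch of a taxi of capacity `q`, the share of a passenger
going to `y` is at least `y / q`; in the instance `x = (1, 1, 2, 2)` the two agents with
destination `1` attain this bound and envy no one, and the remaining agents `3` and `4` would
pay exactly their current share after a swap.
-/

open Finset MeasureTheory ENNReal

/-- Agent `a` of taxi `i` envies agent `b` of taxi `j`. -/
noncomputable def Envies (xd : ℕ → ℝ) {k : ℕ} (q : Fin k → ℕ)
    (Tl : Fin k → Finset ℕ) (i j : Fin k) (a b : ℕ) : Prop :=
  i ≠ j ∧ a ∈ Tl i ∧ b ∈ Tl j ∧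
    taxiCost xd (q j) ((Tl j).erase b ∪ {a}) (xd a) < taxiCost xd (q i) (Tl i) (xd a)

/-- Agent `a` of taxi `i` can replace agent `b` of taxi `j`. -/
noncomputable def CanReplace (xd : ℕ → ℝ) {k : ℕ} (q : Fin k → ℕ)
    (Tl : Fin k → Finset ℕ) (i j : Fin k) (a b : ℕ) : Prop :=
  a ∈ Tl i ∧ b ∈ Tl j ∧ (i = j ∨
    taxiCost xd (q j) ((Tl j).erase b ∪ {a}) (xd a) ≤ taxiCost xd (q i) (Tl i) (xd a))

/-- Envy-freeness: no agent envies another. -/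
noncomputable def EF (xd : ℕ → ℝ) {k : ℕ} (q : Fin k → ℕ)
    (Tl : Fin k → Finset ℕ) : Prop :=
  ∀ i j a b, ¬ Envies xd q Tl i j a b

/-- Weak swap-stability: no two agents envy each other. -/
noncomputable def WSS (xd : ℕ → ℝ) {k : ℕ} (q : Fin k → ℕ)
    (Tl : Fin k → Finset ℕ) : Prop :=
  ∀ i j a b, ¬ (Envies xd q Tl i j a b ∧ Envies xd q Tl j i b a)

/-- Strong swap-stability: no pair `(a,b)` where `a` envies `b` and `b` can replace
`a`. -/
noncomputable def SSS (xd : ℕ → ℝ) {k : ℕ} (q : Fin k → ℕ)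
    (Tl : Fin k → Finset ℕ) : Prop :=
  ∀ i j a b, ¬ (Envies xd q Tl i j a b ∧ CanReplace xd q Tl j i b a)

section General

variable {xd : ℕ → ℝ} {k : ℕ} {q : Fin k → ℕ} {Tl : Fin k → Finset ℕ}

theorem Envies.canReplace {i j : Fin k} {a b : ℕ} (h : Envies xd q Tl i j a b) :
    CanReplace xd q Tl i j a b :=
  ⟨h.2.1, h.2.2.1, Or.inr h.2.2.2.le⟩

theorem EF.sss (h : EF xd q Tl) : SSS xd q Tl :=
  fun i j a b hab => h i j a b hab.1

theorem SSS.wss (h : SSS xd q Tl) : WSS xd q Tl :=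
  fun i j a b hab => h i j a b ⟨hab.1, hab.2.canReplace⟩

end General

section TwoTaxis

variable {xd : ℕ → ℝ} {q : Fin 2 → ℕ} {Tl : Fin 2 → Finset ℕ}

theorem sss_of_forall_not_canReplace (h : ∀ a b, ¬ CanReplace xd q Tl 0 1 a b) :
    SSS xd q Tl := by
  rintro i j a b ⟨hab, hba⟩
  fin_cases i <;> fin_cases j
  · exact hab.1 rfl
  · exact h a b hab.canReplace
  · exact h b a hba
  · exact hab.1 rfl

theorem wss_of_forall_not_and (h : ∀ a b, ¬ (Envies xd q Tl 0 1 a b ∧ Envies xd q Tl 1 0 b a)) :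
    WSS xd q Tl := by
  rintro i j a b ⟨hab, hba⟩
  fin_cases i <;> fin_cases j
  · exact hab.1 rfl
  · exact h a b ⟨hab, hba⟩
  · exact h b a ⟨hba, hab⟩
  · exact hab.1 rfl

end TwoTaxis

section CostShares

variable {xd : ℕ → ℝ} {T : Finset ℕ}

theorem setLIntegral_inv_nT_of_eqOn {a b : ℝ} {m : ℕ} (h : ∀ r ∈ Set.Ioc a b, nT xd T r = m) :
    ∫⁻ r in Set.Ioc a b, (nT xd T r : ℝ≥0∞)⁻¹ = (m : ℝ≥0∞)⁻¹ * ENNReal.ofReal (b - a) := by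
  rw [setLIntegral_congr_fun measurableSet_Ioc (fun r hr => by rw [h r hr]),
    setLIntegral_const, Real.volume_Ioc]

theorem nT_of_forall_le {r : ℝ} (h : ∀ a ∈ T, r ≤ xd a) : nT xd T r = T.card := by
  rw [nT, filter_true_of_mem h]

theorem phi_singleton {u : ℕ} {y : ℝ} (hy : y ≤ xd u) : phi xd {u} y = ENNReal.ofReal y := by
  rw [phi, setLIntegral_inv_nT_of_eqOn (m := 1) fun r hr =>
    nT_of_forall_le (by simpa using hr.2.trans hy)]
  simp

theorem phi_pair_of_le_of_le {u v : ℕ} {y : ℝ} (huv : u ≠ v) (hu : y ≤ xd u) (hv : y ≤ xd v) :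
    phi xd {u, v} y = ENNReal.ofReal (y / 2) := by
  rw [phi, setLIntegral_inv_nT_of_eqOn (m := 2) fun r hr => by
    rw [nT_of_forall_le (by simpa using ⟨hr.2.trans hu, hr.2.trans hv⟩), card_pair huv]]
  rw [sub_zero, ENNReal.ofReal_div_of_pos two_pos, div_eq_mul_inv, mul_comm]
  simp

theorem phi_pair_of_le {u v : ℕ} (huv : u ≠ v) (hu : 0 ≤ xd u) (hle : xd u ≤ xd v) :
    phi xd {u, v} (xd v) = ENNReal.ofReal (xd v - xd u / 2) := by
  have hlow : ∀ r ∈ Set.Ioc (xd u) (xd v), nT xd {u, v} r = 1 := fun r hr => by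
    rw [nT, filter_insert, if_neg (not_le.2 hr.1), filter_singleton, if_pos hr.2, card_singleton]
  rw [phi, ← Set.Ioc_union_Ioc_eq_Ioc hu hle,
    lintegral_union measurableSet_Ioc (Set.Ioc_disjoint_Ioc_of_le le_rfl), ← phi,
    phi_pair_of_le_of_le huv le_rfl hle, setLIntegral_inv_nT_of_eqOn hlow, Nat.cast_one, inv_one,
    one_mul, ← ENNReal.ofReal_add (by positivity) (by linarith)]
  ring_nf

theorem taxiCost_of_card_le {q : ℕ} {y : ℝ} (h : T.card ≤ q) : taxiCost xd q T y = phi xd T y :=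
  if_pos h

theorem ofReal_div_le_taxiCost (q : ℕ) (y : ℝ) : ENNReal.ofReal (y / q) ≤ taxiCost xd q T y := by
  unfold taxiCost
  split_ifs with hT
  · rcases Nat.eq_zero_or_pos q with rfl | hq
    · simp
    have hnT : ∀ r, (q : ℝ≥0∞)⁻¹ ≤ (nT xd T r : ℝ≥0∞)⁻¹ := fun r =>
      ENNReal.inv_le_inv.2 (Nat.cast_le.2 ((card_filter_le _ _).trans hT))
    calc ENNReal.ofReal (y / q) = ∫⁻ _ in Set.Ioc (0 : ℝ) y, (q : ℝ≥0∞)⁻¹ := by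
          rw [setLIntegral_const, Real.volume_Ioc, sub_zero,
            ENNReal.ofReal_div_of_pos (Nat.cast_pos.2 hq), ENNReal.ofReal_natCast, div_eq_mul_inv,
            mul_comm]
      _ ≤ phi xd T y := lintegral_mono hnT
  · exact le_top

end CostShares

theorem not_envies_of_taxiCost_le {xd : ℕ → ℝ} {k : ℕ} {q : Fin k → ℕ} {Tl : Fin k → Finset ℕ}
    {i j : Fin k} {a b : ℕ} (h : taxiCost xd (q i) (Tl i) (xd a) ≤ ENNReal.ofReal (xd a / q j)) :
    ¬ Envies xd q Tl i j a b :=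
  fun hab => (h.trans (ofReal_div_le_taxiCost _ _)).not_gt hab.2.2.2

section ThreeAgents

noncomputable def xdThree : ℕ → ℝ := fun n => if n ≤ 1 then 1 else 2

theorem xdThree_pos (n : ℕ) : 0 < xdThree n := by
  unfold xdThree; split_ifs <;> norm_num

theorem sss_xdThree : SSS xdThree ![2, 1] ![{1, 2}, {3}] := by
  refine sss_of_forall_not_canReplace ?_
  rintro a b ⟨ha, hb, h | hle⟩
  · exact absurd h (by decide)
  simp only [Matrix.cons_val_zero, Matrix.cons_val_one] at ha hb hle
  obtain rfl := mem_singleton.1 hb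
  rcases mem_insert.1 ha with rfl | ha
  · rw [show ({3} : Finset ℕ).erase 3 ∪ {1} = {1} by decide, taxiCost_of_card_le (by decide),
      taxiCost_of_card_le (by decide), phi_singleton le_rfl,
      phi_pair_of_le_of_le (by decide) le_rfl (by norm_num [xdThree]),
      ENNReal.ofReal_le_ofReal_iff (by norm_num [xdThree])] at hle
    norm_num [xdThree] at hle
  · obtain rfl := mem_singleton.1 ha
    rw [show ({3} : Finset ℕ).erase 3 ∪ {2} = {2} by decide, taxiCost_of_card_le (by decide),
      taxiCost_of_card_le (by decide), phi_singleton le_rfl,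
      phi_pair_of_le (by decide) (xdThree_pos 1).le (by norm_num [xdThree]),
      ENNReal.ofReal_le_ofReal_iff (by norm_num [xdThree])] at hle
    norm_num [xdThree] at hle

theorem not_ef_xdThree : ¬ EF xdThree ![2, 1] ![{1, 2}, {3}] := by
  refine fun h => h 1 0 3 2 ⟨by decide, by decide, by decide, ?_⟩
  simp only [Matrix.cons_val_zero, Matrix.cons_val_one]
  rw [show ({1, 2} : Finset ℕ).erase 2 ∪ {3} = {1, 3} by decide, taxiCost_of_card_le (by decide),
    taxiCost_of_card_le (by decide), phi_singleton le_rfl,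
    phi_pair_of_le (by decide) (xdThree_pos 1).le (by norm_num [xdThree]),
    ENNReal.ofReal_lt_ofReal_iff (xdThree_pos 3)]
  norm_num [xdThree]

end ThreeAgents

section FourAgents

noncomputable def xdFour : ℕ → ℝ := fun n => if n ≤ 2 then 1 else 2

theorem xdFour_pos (n : ℕ) : 0 < xdFour n := by
  unfold xdFour; split_ifs <;> norm_num

theorem wss_xdFour : WSS xdFour ![2, 2] ![{1, 3}, {2, 4}] := by
  refine wss_of_forall_not_and ?_
  rintro a b ⟨hab, hba⟩
  have ha := hab.2.1
  have hb := hab.2.2.1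
  simp only [Matrix.cons_val_zero, Matrix.cons_val_one] at ha hb
  rcases mem_insert.1 ha with rfl | ha
  · refine not_envies_of_taxiCost_le (le_of_eq ?_) hab
    simp only [Matrix.cons_val_zero, Matrix.cons_val_one]
    rw [taxiCost_of_card_le (by decide), phi_pair_of_le_of_le (by decide) le_rfl
      (by norm_num [xdFour])]
    norm_num
  obtain rfl := mem_singleton.1 ha
  rcases mem_insert.1 hb with rfl | hb
  · refine not_envies_of_taxiCost_le (le_of_eq ?_) hba
    simp only [Matrix.cons_val_zero, Matrix.cons_val_one]
    rw [taxiCost_of_card_le (by decide), phi_pair_of_le_of_le (by decide) le_rfl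
      (by norm_num [xdFour])]
    norm_num
  obtain rfl := mem_singleton.1 hb
  have hlt := hab.2.2.2
  simp only [Matrix.cons_val_zero, Matrix.cons_val_one] at hlt
  rw [show ({2, 4} : Finset ℕ).erase 4 ∪ {3} = {2, 3} by decide, taxiCost_of_card_le (by decide),
    taxiCost_of_card_le (by decide), phi_pair_of_le (by decide) (xdFour_pos 2).le
    (by norm_num [xdFour]), phi_pair_of_le (by decide) (xdFour_pos 1).le
    (by norm_num [xdFour])] at hlt
  norm_num [xdFour] at hlt

theorem not_sss_xdFour : ¬ SSS xdFour ![2, 2] ![{1, 3}, {2, 4}] := by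
  refine fun h => h 0 1 3 2 ⟨⟨by decide, by decide, by decide, ?_⟩, by decide, by decide, Or.inr ?_⟩
  · simp only [Matrix.cons_val_zero, Matrix.cons_val_one]
    rw [show ({2, 4} : Finset ℕ).erase 2 ∪ {3} = {3, 4} by decide, taxiCost_of_card_le (by decide),
      taxiCost_of_card_le (by decide),
      phi_pair_of_le_of_le (by decide) le_rfl (by norm_num [xdFour]),
      phi_pair_of_le (by decide) (xdFour_pos 1).le (by norm_num [xdFour]),
      ENNReal.ofReal_lt_ofReal_iff (by norm_num [xdFour])]
    norm_num [xdFour]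
  · simp only [Matrix.cons_val_zero, Matrix.cons_val_one]
    rw [show ({1, 3} : Finset ℕ).erase 3 ∪ {2} = {1, 2} by decide, taxiCost_of_card_le (by decide),
      taxiCost_of_card_le (by decide),
      phi_pair_of_le_of_le (by decide) (by norm_num [xdFour]) le_rfl,
      phi_pair_of_le_of_le (by decide) le_rfl (by norm_num [xdFour])]

end FourAgents

/-- EF ⊆ SSS ⊆ WSS, and both inclusions are strict: there are instances
with feasible allocations that are strongly swap-stable but not envy-free, and weakly
swap-stable but not strongly swap-stable. -/
theorem stmt19 :
    (∀ (xd : ℕ → ℝ) (k : ℕ) (q : Fin k → ℕ) (Tl : Fin k → Finset ℕ),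
      EF xd q Tl → SSS xd q Tl) ∧
    (∀ (xd : ℕ → ℝ) (k : ℕ) (q : Fin k → ℕ) (Tl : Fin k → Finset ℕ),
      SSS xd q Tl → WSS xd q Tl) ∧
    (∃ (A : Finset ℕ) (xd : ℕ → ℝ) (k : ℕ) (q : Fin k → ℕ)
        (Tl : Fin k → Finset ℕ),
      (∀ a ∈ A, 0 < xd a) ∧ IsPartition A Tl ∧ Feasible q Tl ∧
        SSS xd q Tl ∧ ¬ EF xd q Tl) ∧
    (∃ (A : Finset ℕ) (xd : ℕ → ℝ) (k : ℕ) (q : Fin k → ℕ)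
        (Tl : Fin k → Finset ℕ),
      (∀ a ∈ A, 0 < xd a) ∧ IsPartition A Tl ∧ Feasible q Tl ∧
        WSS xd q Tl ∧ ¬ SSS xd q Tl) := by
  refine ⟨fun _ _ _ _ => EF.sss, fun _ _ _ _ => SSS.wss, ?_, ?_⟩
  · exact ⟨{1, 2, 3}, xdThree, 2, ![2, 1], ![{1, 2}, {3}], fun a _ => xdThree_pos a,
      ⟨by decide, by decide⟩, by unfold Feasible; decide, sss_xdThree, not_ef_xdThree⟩
  · exact ⟨{1, 2, 3, 4}, xdFour, 2, ![2, 2], ![{1, 3}, {2, 4}], fun a _ => xdFour_pos a,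
      ⟨by decide, by decide⟩, by unfold Feasible; decide, wss_xdFour, not_sss_xdFour⟩
end
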